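/- Let f₂ : [0,1]^d → ℝ admit a max-min representation f₂(x) = max_{1≤s≤m} min_{i∈I_s}(aᵢ·x + cᵢ) with ‖aᵢ‖ ≤ 1 for all i, where for each index k ∈ {1,…,m} there exists x_k ∈ [0,1]^d with f₂(x_k) = a_k·x_k + c_k. If f₁ : [0,1]^d → ℝ satisfies ‖f₂ − f₁‖_∞ < ε, then max_{1≤i≤m}|cᵢ| ≤ ‖f₁‖_∞ + ε + √d. -/
import Mathlib


open scoped RealInnerProductSpace

theorem stmt9 {d : ℕ} (m : ℕ) (hm : 0 < m)
    (I : Fin m → Finset (Fin m)) (hI : ∀ s, (I s).Nonempty)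
    (a : Fin m → EuclideanSpace ℝ (Fin d)) (c : Fin m → ℝ)
    (ha : ∀ i, ‖a i‖ ≤ 1)
    (f₁ f₂ : EuclideanSpace ℝ (Fin d) → ℝ) (ε : ℝ) (hε : 0 < ε)
    (hrep : ∀ x : EuclideanSpace ℝ (Fin d), (∀ i, 0 ≤ x i ∧ x i ≤ 1) →
      f₂ x = Finset.univ.sup'
        (Finset.univ_nonempty_iff.mpr (Fin.pos_iff_nonempty.mp hm))
        (fun s => (I s).inf' (hI s) (fun i => ⟪a i, x⟫ + c i)))
    (hatt : ∀ k : Fin m, ∃ x : EuclideanSpace ℝ (Fin d),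
      (∀ i, 0 ≤ x i ∧ x i ≤ 1) ∧ f₂ x = ⟪a k, x⟫ + c k)
    (hclose : ∀ x : EuclideanSpace ℝ (Fin d), (∀ i, 0 ≤ x i ∧ x i ≤ 1) →
      |f₂ x - f₁ x| < ε) :
    ∀ k : Fin m, |c k| ≤
      (⨆ x : {x : EuclideanSpace ℝ (Fin d) // ∀ i, 0 ≤ x i ∧ x i ≤ 1}, |f₁ x.1|)
        + ε + Real.sqrt d := by
  have hne : (Finset.univ : Finset (Fin m)).Nonempty :=
    Finset.univ_nonempty_iff.mpr (Fin.pos_iff_nonempty.mp hm)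
  -- norm bound on the cube
  have hnorm : ∀ x : EuclideanSpace ℝ (Fin d), (∀ i, 0 ≤ x i ∧ x i ≤ 1) →
      ‖x‖ ≤ Real.sqrt d := by
    intro x hx
    rw [EuclideanSpace.norm_eq]
    apply Real.sqrt_le_sqrt
    calc (∑ i, ‖x i‖ ^ 2) ≤ ∑ _i : Fin d, (1 : ℝ) := by
          apply Finset.sum_le_sum
          intro i _
          have h1 := (hx i).1
          have h2 := (hx i).2
          have : ‖x i‖ ≤ 1 := by
            rw [Real.norm_eq_abs, abs_of_nonneg h1]; exact h2
          calc ‖x i‖ ^ 2 ≤ 1 ^ 2 := by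
                exact pow_le_pow_left₀ (norm_nonneg _) this 2
            _ = 1 := one_pow 2
      _ = d := by simp
  -- inner product bound
  have hinner : ∀ (i : Fin m) (x : EuclideanSpace ℝ (Fin d)),
      (∀ j, 0 ≤ x j ∧ x j ≤ 1) → |⟪a i, x⟫| ≤ Real.sqrt d := by
    intro i x hx
    calc |⟪a i, x⟫| ≤ ‖a i‖ * ‖x‖ := abs_real_inner_le_norm _ _
      _ ≤ 1 * Real.sqrt d := by
          apply mul_le_mul (ha i) (hnorm x hx) (norm_nonneg _) zero_le_one
      _ = Real.sqrt d := one_mul _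
  -- bound for f₂ on the cube
  set C : ℝ := (Finset.univ.sup' hne fun i => |c i|) + Real.sqrt d with hC
  have hgC : ∀ (i : Fin m) (x : EuclideanSpace ℝ (Fin d)),
      (∀ j, 0 ≤ x j ∧ x j ≤ 1) → |⟪a i, x⟫ + c i| ≤ C := by
    intro i x hx
    calc |⟪a i, x⟫ + c i| ≤ |⟪a i, x⟫| + |c i| := abs_add_le _ _
      _ ≤ Real.sqrt d + Finset.univ.sup' hne (fun i => |c i|) := by
          gcongr
          · exact hinner i x hx
          · exact Finset.le_sup' (fun i => |c i|) (Finset.mem_univ i)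
      _ = C := by rw [hC]; ring
  have hf2 : ∀ x : EuclideanSpace ℝ (Fin d), (∀ j, 0 ≤ x j ∧ x j ≤ 1) →
      |f₂ x| ≤ C := by
    intro x hx
    rw [hrep x hx, abs_le]
    constructor
    · obtain ⟨s, hs⟩ := hne
      refine le_trans ?_ (Finset.le_sup' _ (Finset.mem_univ s))
      apply Finset.le_inf'
      intro i hi
      have := hgC i x hx
      rw [abs_le] at this
      exact this.1
    · apply Finset.sup'_le
      intro s _
      obtain ⟨i, hi⟩ := hI s
      refine le_trans (Finset.inf'_le _ hi) ?_
      have := hgC i x hx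
      rw [abs_le] at this
      exact this.2
  -- boundedness of |f₁| on the cube
  have hbdd : BddAbove (Set.range fun x :
      {x : EuclideanSpace ℝ (Fin d) // ∀ i, 0 ≤ x i ∧ x i ≤ 1} => |f₁ x.1|) := by
    refine ⟨C + ε, ?_⟩
    rintro _ ⟨⟨x, hx⟩, rfl⟩
    have h1 := hclose x hx
    have h2 := hf2 x hx
    have : |f₁ x| ≤ |f₂ x| + |f₂ x - f₁ x| := by
      have := abs_sub_abs_le_abs_sub (f₁ x) (f₂ x)
      rw [abs_sub_comm] at this
      linarith
    linarith
  intro k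
  obtain ⟨x, hx, hfx⟩ := hatt k
  have h1 := hclose x hx
  have h2 := hinner k x hx
  have h3 : |f₁ x| ≤ ⨆ x : {x : EuclideanSpace ℝ (Fin d) // ∀ i, 0 ≤ x i ∧ x i ≤ 1},
      |f₁ x.1| := le_ciSup hbdd ⟨x, hx⟩
  have hck : c k = f₂ x - ⟪a k, x⟫ := by linarith [hfx]
  have : |c k| ≤ |f₁ x| + |f₂ x - f₁ x| + |⟪a k, x⟫| := by
    rw [hck]
    calc |f₂ x - ⟪a k, x⟫| ≤ |f₂ x| + |⟪a k, x⟫| := abs_sub _ _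
      _ ≤ (|f₁ x| + |f₂ x - f₁ x|) + |⟪a k, x⟫| := by
          have := abs_sub_abs_le_abs_sub (f₂ x) (f₁ x)
          linarith
  linarith
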